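/- Let ψ : ℝ² → ℝ be twice continuously differentiable with compact support, and define Q_ψ(η₁,η₂) := (∫_{ℝ²} |∂₁∂₂ψ(t,y)|² · |∫_0^y (∫_0^z e^{iη₁w} dw) e^{iη₂z} dz|² dt dy)^{1/2} for η₁, η₂ ∈ ℝ. Then for all λ₁, λ₂ ∈ (0,2) with λ₁ + λ₂ > 1: (i) the integral ∫_{ℝ²} |Q_ψ(x₁,x₂)|² |x₁|^{1−λ₁} |x₂|^{1−λ₂} dx₁ dx₂ is finite; (ii) there exist ε > 0 and C > 0 such that for every c ≥ 1 and each i ∈ {1,2}, ∫_{|x_i| ≥ c} |Q_ψ(x₁,x₂)|² |x₁|^{1−λ₁} |x₂|^{1−λ₂} dx₁ dx₂ ≤ C c^{−ε}. -/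

import Mathlib

/-!
The inner integrals are explicit. Writing `E(a, y) = ∫₀^y e^{iaw} dw`, one has
`|E(a, y)| ≤ min(|y|, 2/|a|)`, and the double integral `K` in `Q_ψ` satisfies both
`iη₁ K = E(η₁ + η₂, y) - E(η₂, y)` and, integrating by parts,
`iη₂ K = E(η₁, y) e^{iη₂y} - E(η₁ + η₂, y)`. As `∂₁∂₂ψ` is bounded with compact support, this gives
`Q_ψ(η)² ≲ ρ(η₁)² (ρ(η₂)² + ρ(η₁ + η₂)²)` with `ρ(t) = 1 / max(1, |t|)`.

Against the weight `|η₁|^a |η₂|^b`, `a, b ∈ (-1, 1)`, the first term is a product of integrable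
functions of one variable, and after the shear `(η₁, η₂) ↦ (η₁, η₁ + η₂)` so is the resonant term
`ρ(η₁)² ρ(η₁ + η₂)²`, once `a + b < 1`. On `{|η_i| ≥ c}` a factor `|η_i|^{-δ} ≤ c^{-δ}` can be
split off, and the shifted exponents stay admissible for small `δ > 0`.
-/

noncomputable section

open MeasureTheory

/-- Partial derivative in the first variable. -/
def pd1 (f : ℝ × ℝ → ℝ) (p : ℝ × ℝ) : ℝ := deriv (fun t => f (t, p.2)) p.1

/-- Partial derivative in the second variable. -/
def pd2 (f : ℝ × ℝ → ℝ) (p : ℝ × ℝ) : ℝ := deriv (fun x => f (p.1, x)) p.2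

/-- `Q_ψ(η₁,η₂) = (∫ |∂₁∂₂ψ(t,y)|² |∫_0^y (∫_0^z e^{iη₁w} dw) e^{iη₂z} dz|² dt dy)^{1/2}`. -/
def Qpsi (ψ : ℝ × ℝ → ℝ) (η₁ η₂ : ℝ) : ℝ :=
  Real.sqrt (∫ p : ℝ × ℝ, |pd1 (pd2 ψ) p| ^ 2 *
    ‖∫ z in (0:ℝ)..p.2,
        (∫ w in (0:ℝ)..z, Complex.exp (Complex.I * (η₁ : ℂ) * (w : ℂ))) *
          Complex.exp (Complex.I * (η₂ : ℂ) * (z : ℂ))‖ ^ 2)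

open Set

def decay (t : ℝ) : ℝ := (max 1 |t|)⁻¹

lemma decay_nonneg (t : ℝ) : 0 ≤ decay t := inv_nonneg.2 (le_max_of_le_left zero_le_one)

lemma decay_le_one (t : ℝ) : decay t ≤ 1 := inv_le_one_of_one_le₀ (le_max_left _ _)

lemma decay_of_abs_le_one {t : ℝ} (ht : |t| ≤ 1) : decay t = 1 := by
  simp [decay, max_eq_left ht]

lemma decay_of_one_le_abs {t : ℝ} (ht : 1 ≤ |t|) : decay t = |t|⁻¹ := by
  simp [decay, max_eq_right ht]

lemma le_mul_decay {x A t : ℝ} (h : x ≤ A) (ht : x * |t| ≤ A) : x ≤ A * decay t := by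
  rw [decay, ← div_eq_mul_inv, le_div_iff₀ (lt_max_of_lt_left one_pos)]
  rcases le_total 1 |t| with h1 | h1
  · rwa [max_eq_right h1]
  · rwa [max_eq_left h1, mul_one]

lemma measurable_decay : Measurable decay := by unfold decay; fun_prop

def freqMajorant (η₁ η₂ : ℝ) : ℝ := decay η₁ ^ 2 * (decay η₂ ^ 2 + decay (η₁ + η₂) ^ 2)

lemma freqMajorant_nonneg (η₁ η₂ : ℝ) : 0 ≤ freqMajorant η₁ η₂ := by
  unfold freqMajorant; positivity

section PhaseIntegrals

open Complex intervalIntegral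

def phaseIntegral (a y : ℝ) : ℂ := ∫ w in (0:ℝ)..y, cexp (I * a * w)

def iteratedPhaseIntegral (η₁ η₂ y : ℝ) : ℂ :=
  ∫ z in (0:ℝ)..y, phaseIntegral η₁ z * cexp (I * η₂ * z)

lemma phaseIntegral_zero (a : ℝ) : phaseIntegral a 0 = 0 := integral_same

lemma continuous_cexp_I_mul (a : ℝ) : Continuous fun w : ℝ => cexp (I * a * w) := by fun_prop

lemma norm_cexp_I_mul (a w : ℝ) : ‖cexp (I * a * w)‖ = 1 := by
  rw [mul_assoc, ← ofReal_mul, norm_exp_I_mul_ofReal]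

lemma hasDerivAt_cexp_I_mul (a z : ℝ) :
    HasDerivAt (fun w : ℝ => cexp (I * a * w)) (I * a * cexp (I * a * z)) z := by
  simpa [mul_comm] using ((hasDerivAt_id (z : ℂ)).const_mul (I * a)).cexp.comp_ofReal

lemma I_mul_phaseIntegral (a y : ℝ) : I * a * phaseIntegral a y = cexp (I * a * y) - 1 := by
  rw [phaseIntegral, ← intervalIntegral.integral_const_mul, integral_eq_sub_of_hasDerivAt
    (fun z _ => hasDerivAt_cexp_I_mul a z)
    ((continuous_const.mul (continuous_cexp_I_mul a)).intervalIntegrable _ _)]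
  simp

lemma norm_phaseIntegral_le_abs (a y : ℝ) : ‖phaseIntegral a y‖ ≤ |y| := by
  simpa [phaseIntegral] using norm_integral_le_of_norm_le_const (a := 0) (b := y)
    (fun w _ => (norm_cexp_I_mul a w).le)

lemma norm_I_mul_ofReal_mul (a : ℝ) (X : ℂ) : ‖I * a * X‖ = ‖X‖ * |a| := by
  rw [norm_mul, norm_mul, norm_I, norm_real, Real.norm_eq_abs]; ring

lemma norm_phaseIntegral_mul_abs_le (a y : ℝ) : ‖phaseIntegral a y‖ * |a| ≤ 2 := by
  rw [← norm_I_mul_ofReal_mul, I_mul_phaseIntegral]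
  calc ‖cexp (I * a * y) - 1‖ ≤ ‖cexp (I * a * y)‖ + ‖(1 : ℂ)‖ := norm_sub_le _ _
    _ = 2 := by rw [norm_cexp_I_mul, norm_one]; norm_num

lemma norm_phaseIntegral_le {R a y : ℝ} (hR : 1 ≤ R) (hy : |y| ≤ R) :
    ‖phaseIntegral a y‖ ≤ 2 * R * decay a :=
  le_mul_decay (by linarith [norm_phaseIntegral_le_abs a y])
    (by linarith [norm_phaseIntegral_mul_abs_le a y])

lemma I_mul_iteratedPhaseIntegral_eq_left (η₁ η₂ y : ℝ) :
    I * η₁ * iteratedPhaseIntegral η₁ η₂ y = phaseIntegral (η₁ + η₂) y - phaseIntegral η₂ y := by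
  have h : ∀ z : ℝ, I * η₁ * (phaseIntegral η₁ z * cexp (I * η₂ * z))
      = cexp (I * ↑(η₁ + η₂) * z) - cexp (I * η₂ * z) := by
    intro z
    rw [← mul_assoc, I_mul_phaseIntegral, sub_mul, one_mul, ← Complex.exp_add]
    push_cast; ring_nf
  rw [iteratedPhaseIntegral, ← intervalIntegral.integral_const_mul]
  simp_rw [h]
  exact integral_sub ((continuous_cexp_I_mul _).intervalIntegrable _ _)
    ((continuous_cexp_I_mul _).intervalIntegrable _ _)

lemma I_mul_iteratedPhaseIntegral_eq_right (η₁ η₂ y : ℝ) :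
    I * η₂ * iteratedPhaseIntegral η₁ η₂ y
      = phaseIntegral η₁ y * cexp (I * η₂ * y) - phaseIntegral (η₁ + η₂) y := by
  have hibp := intervalIntegral.integral_mul_deriv_eq_deriv_mul (a := 0) (b := y)
    (u := phaseIntegral η₁) (v := fun z : ℝ => cexp (I * η₂ * z))
    (fun z _ => ((continuous_cexp_I_mul η₁).integral_hasStrictDerivAt 0 z).hasDerivAt)
    (fun z _ => hasDerivAt_cexp_I_mul η₂ z)
    ((continuous_cexp_I_mul η₁).intervalIntegrable _ _)
    ((continuous_const.mul (continuous_cexp_I_mul η₂)).intervalIntegrable _ _)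
  have hsum : ∀ z : ℝ, cexp (I * η₁ * z) * cexp (I * η₂ * z) = cexp (I * ↑(η₁ + η₂) * z) := by
    intro z; rw [← Complex.exp_add]; push_cast; ring_nf
  simp only [hsum, phaseIntegral_zero, zero_mul, sub_zero] at hibp
  calc I * η₂ * iteratedPhaseIntegral η₁ η₂ y
      = ∫ z in (0:ℝ)..y, phaseIntegral η₁ z * (I * η₂ * cexp (I * η₂ * z)) := by
        rw [iteratedPhaseIntegral, ← intervalIntegral.integral_const_mul]
        congr 1; ext z; ring
    _ = _ := hibp

lemma norm_iteratedPhaseIntegral_le {R η₁ η₂ y : ℝ} (hR : 1 ≤ R) (hy : |y| ≤ R) :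
    ‖iteratedPhaseIntegral η₁ η₂ y‖ ≤ 2 * R ^ 2 * (decay η₂ + decay (η₁ + η₂)) * decay η₁ := by
  have crude : ‖iteratedPhaseIntegral η₁ η₂ y‖ ≤ 2 * R ^ 2 := by
    have hinner : ∀ z ∈ uIoc (0:ℝ) y, ‖phaseIntegral η₁ z * cexp (I * η₂ * z)‖ ≤ R := fun z hz => by
      have hzy := abs_sub_left_of_mem_uIcc (uIoc_subset_uIcc hz)
      rw [sub_zero, sub_zero] at hzy
      rw [norm_mul, norm_cexp_I_mul, mul_one]
      linarith [norm_phaseIntegral_le_abs η₁ z]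
    have := norm_integral_le_of_norm_le_const hinner
    rw [sub_zero] at this
    rw [iteratedPhaseIntegral]
    nlinarith [abs_nonneg y]
  have right : ‖iteratedPhaseIntegral η₁ η₂ y‖ * |η₂| ≤ 2 * R ^ 2 := by
    rw [← norm_I_mul_ofReal_mul, I_mul_iteratedPhaseIntegral_eq_right]
    refine (norm_sub_le _ _).trans ?_
    rw [norm_mul, norm_cexp_I_mul, mul_one]
    nlinarith [norm_phaseIntegral_le_abs η₁ y, norm_phaseIntegral_le_abs (η₁ + η₂) y]
  have left :
      ‖iteratedPhaseIntegral η₁ η₂ y‖ * |η₁| ≤ 2 * R ^ 2 * (decay η₂ + decay (η₁ + η₂)) := by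
    rw [← norm_I_mul_ofReal_mul, I_mul_iteratedPhaseIntegral_eq_left]
    refine (norm_sub_le _ _).trans ?_
    have h₁ := norm_phaseIntegral_le (a := η₁ + η₂) hR hy
    have h₂ := norm_phaseIntegral_le (a := η₂) hR hy
    have : 2 * R ≤ 2 * R ^ 2 := by nlinarith
    nlinarith [decay_nonneg η₂, decay_nonneg (η₁ + η₂)]
  refine le_mul_decay ?_ left
  calc ‖iteratedPhaseIntegral η₁ η₂ y‖ ≤ 2 * R ^ 2 * decay η₂ := le_mul_decay crude right
    _ ≤ 2 * R ^ 2 * (decay η₂ + decay (η₁ + η₂)) := by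
      gcongr; exact le_add_of_nonneg_right (decay_nonneg _)

lemma norm_iteratedPhaseIntegral_sq_le {R η₁ η₂ y : ℝ} (hR : 1 ≤ R) (hy : |y| ≤ R) :
    ‖iteratedPhaseIntegral η₁ η₂ y‖ ^ 2 ≤ 8 * R ^ 4 * freqMajorant η₁ η₂ :=
  calc ‖iteratedPhaseIntegral η₁ η₂ y‖ ^ 2
      ≤ (2 * R ^ 2 * (decay η₂ + decay (η₁ + η₂)) * decay η₁) ^ 2 := by
        gcongr; exact norm_iteratedPhaseIntegral_le hR hy
    _ = 4 * R ^ 4 * decay η₁ ^ 2 * (decay η₂ + decay (η₁ + η₂)) ^ 2 := by ring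
    _ ≤ 4 * R ^ 4 * decay η₁ ^ 2 * (2 * (decay η₂ ^ 2 + decay (η₁ + η₂) ^ 2)) := by
        gcongr; exact add_sq_le
    _ = 8 * R ^ 4 * freqMajorant η₁ η₂ := by rw [freqMajorant]; ring

end PhaseIntegrals

lemma pd1_eq_fderiv {f : ℝ × ℝ → ℝ} (hf : Differentiable ℝ f) :
    pd1 f = fun p => fderiv ℝ f p (1, 0) := by
  ext p
  exact ((hf p).hasFDerivAt.comp_hasDerivAt p.1
    ((hasDerivAt_id p.1).prodMk (hasDerivAt_const p.1 p.2))).deriv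

lemma pd2_eq_fderiv {f : ℝ × ℝ → ℝ} (hf : Differentiable ℝ f) :
    pd2 f = fun p => fderiv ℝ f p (0, 1) := by
  ext p
  exact ((hf p).hasFDerivAt.comp_hasDerivAt p.2
    ((hasDerivAt_const p.2 p.1).prodMk (hasDerivAt_id p.2))).deriv

lemma pd1_pd2_eq_fderiv {ψ : ℝ × ℝ → ℝ} (hψ : ContDiff ℝ 2 ψ) :
    pd1 (pd2 ψ) = fun p => fderiv ℝ (fun q => fderiv ℝ ψ q (0, 1)) p (1, 0) := by
  have h1 : ContDiff ℝ 1 fun q => fderiv ℝ ψ q (0, 1) :=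
    (hψ.fderiv_right (by norm_num)).clm_apply contDiff_const
  rw [pd2_eq_fderiv (hψ.differentiable (by norm_num)),
    pd1_eq_fderiv (h1.differentiable one_ne_zero)]

lemma continuous_pd1_pd2 {ψ : ℝ × ℝ → ℝ} (hψ : ContDiff ℝ 2 ψ) : Continuous (pd1 (pd2 ψ)) := by
  rw [pd1_pd2_eq_fderiv hψ]
  exact (((hψ.fderiv_right (by norm_num)).clm_apply contDiff_const).continuous_fderiv
    one_ne_zero).clm_apply continuous_const

lemma hasCompactSupport_pd1_pd2 {ψ : ℝ × ℝ → ℝ} (hψ : ContDiff ℝ 2 ψ) (hψc : HasCompactSupport ψ) :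
    HasCompactSupport (pd1 (pd2 ψ)) := by
  rw [pd1_pd2_eq_fderiv hψ]
  exact ((hψc.fderiv_apply (𝕜 := ℝ) (0, 1)).fderiv_apply (𝕜 := ℝ) (1, 0))

lemma integral_sq_mul_norm_iteratedPhaseIntegral_sq_le {D : ℝ × ℝ → ℝ}
    (hD : Integrable fun p => |D p| ^ 2) {R : ℝ} (hR : 1 ≤ R)
    (hsupp : ∀ p, D p ≠ 0 → |p.2| ≤ R) (η₁ η₂ : ℝ) :
    ∫ p, |D p| ^ 2 * ‖iteratedPhaseIntegral η₁ η₂ p.2‖ ^ 2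
      ≤ (∫ p, |D p| ^ 2) * (8 * R ^ 4 * freqMajorant η₁ η₂) := by
  rw [← integral_mul_const]
  refine integral_mono_of_nonneg (Filter.Eventually.of_forall fun p => by positivity)
    (hD.mul_const _) (Filter.Eventually.of_forall fun p => ?_)
  rcases eq_or_ne (D p) 0 with h0 | h0
  · simp [h0]
  · exact mul_le_mul_of_nonneg_left (norm_iteratedPhaseIntegral_sq_le hR (hsupp p h0))
      (by positivity)

lemma Qpsi_eq_sqrt (ψ : ℝ × ℝ → ℝ) (η₁ η₂ : ℝ) :
    Qpsi ψ η₁ η₂ = √(∫ p, |pd1 (pd2 ψ) p| ^ 2 * ‖iteratedPhaseIntegral η₁ η₂ p.2‖ ^ 2) := rfl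

lemma exists_sq_Qpsi_le {ψ : ℝ × ℝ → ℝ} (hψ : ContDiff ℝ 2 ψ) (hψc : HasCompactSupport ψ) :
    ∃ B, 0 ≤ B ∧ ∀ η₁ η₂, Qpsi ψ η₁ η₂ ^ 2 ≤ B * freqMajorant η₁ η₂ := by
  have hDc := continuous_pd1_pd2 hψ
  have hDs := hasCompactSupport_pd1_pd2 hψ hψc
  obtain ⟨r, hr⟩ := isBounded_iff_forall_norm_le.1 hDs.isCompact.isBounded
  have hsupp : ∀ p, pd1 (pd2 ψ) p ≠ 0 → |p.2| ≤ max r 1 := fun p hp =>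
    (norm_snd_le p).trans ((hr p (subset_tsupport _ hp)).trans (le_max_left _ _))
  have hD : Integrable fun p => |pd1 (pd2 ψ) p| ^ 2 :=
    (hDc.abs.pow 2).integrable_of_hasCompactSupport (hDs.comp_left (g := fun t : ℝ => |t| ^ 2)
      (by norm_num) :)
  refine ⟨(∫ p, |pd1 (pd2 ψ) p| ^ 2) * (8 * max r 1 ^ 4), by positivity, fun η₁ η₂ => ?_⟩
  rw [Qpsi_eq_sqrt, Real.sq_sqrt (integral_nonneg fun p => by positivity), mul_assoc]
  exact integral_sq_mul_norm_iteratedPhaseIntegral_sq_le hD (le_max_right r 1) hsupp η₁ η₂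

lemma measurable_Qpsi {ψ : ℝ × ℝ → ℝ} (hψ : ContDiff ℝ 2 ψ) :
    Measurable fun x : ℝ × ℝ => Qpsi ψ x.1 x.2 := by
  have hD := continuous_pd1_pd2 hψ
  have hG : Continuous fun xp : (ℝ × ℝ) × (ℝ × ℝ) =>
      |pd1 (pd2 ψ) xp.2| ^ 2 * ‖iteratedPhaseIntegral xp.1.1 xp.1.2 xp.2.2‖ ^ 2 := by
    unfold iteratedPhaseIntegral phaseIntegral; fun_prop
  exact Real.continuous_sqrt.measurable.comp hG.stronglyMeasurable.integral_prod_right'.measurable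

def profile (e t : ℝ) : ℝ := decay t ^ 2 * |t| ^ e

lemma profile_nonneg (e t : ℝ) : 0 ≤ profile e t :=
  mul_nonneg (pow_nonneg (decay_nonneg t) 2) (Real.rpow_nonneg (abs_nonneg t) e)

lemma measurable_profile (e : ℝ) : Measurable (profile e) := by
  unfold profile; have := measurable_decay; fun_prop

lemma profile_zero (t : ℝ) : profile 0 t = decay t ^ 2 := by simp [profile]

lemma integrable_comp_abs_of_integrableOn_Ioi {E : Type*} [NormedAddCommGroup E] {f : ℝ → E}
    (hf : IntegrableOn f (Ioi 0)) : Integrable (fun x => f |x|) := by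
  have hpos : IntegrableOn (fun x => f |x|) (Ioi 0) :=
    hf.congr_fun (fun x hx => by rw [abs_of_pos (mem_Ioi.1 hx)]) measurableSet_Ioi
  have hneg : IntegrableOn (fun x => f |x|) (Iic 0) := by
    rw [← (Measure.measurePreserving_neg volume).integrableOn_comp_preimage
      (Homeomorph.neg ℝ).measurableEmbedding]
    simp only [Function.comp_def, abs_neg, neg_preimage, neg_Iic, neg_zero]
    exact (integrableOn_Ici_iff_integrableOn_Ioi).2 hpos
  rw [← integrableOn_univ, ← Iic_union_Ioi (a := (0 : ℝ))]
  exact hneg.union hpos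

lemma integrable_profile {e : ℝ} (he : -1 < e) (he' : e < 1) : Integrable (profile e) := by
  have near : IntegrableOn (fun s : ℝ => decay s ^ 2 * s ^ e) (Ioc 0 1) := by
    have := intervalIntegral.intervalIntegrable_rpow' (a := 0) (b := 1) he
    rw [intervalIntegrable_iff, uIoc_of_le zero_le_one] at this
    refine this.congr_fun (fun s hs => ?_) measurableSet_Ioc
    rw [decay_of_abs_le_one (by rw [abs_of_pos hs.1]; exact hs.2), one_pow, one_mul]
  have far : IntegrableOn (fun s : ℝ => decay s ^ 2 * s ^ e) (Ioi 1) := by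
    refine (integrableOn_Ioi_rpow_of_lt (by linarith : e - 2 < -1) one_pos).congr_fun
      (fun s hs => ?_) measurableSet_Ioi
    have hs0 : 0 < s := one_pos.trans hs
    rw [decay_of_one_le_abs (by rw [abs_of_pos hs0]; exact hs.le), abs_of_pos hs0]
    show s ^ (e - 2) = _
    rw [Real.rpow_sub hs0, Real.rpow_two, div_eq_inv_mul, inv_pow]
  have whole : IntegrableOn (fun s : ℝ => decay s ^ 2 * s ^ e) (Ioi 0) := by
    rw [← Ioc_union_Ioi_eq_Ioi zero_le_one]
    exact near.union far
  convert integrable_comp_abs_of_integrableOn_Ioi whole using 2 with t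
  simp [profile, decay]

lemma sq_decay_add_mul_rpow_le_of_nonneg {b : ℝ} (hb : 0 ≤ b) (hb' : b ≤ 1) (s t : ℝ) :
    decay (s + t) ^ 2 * |t| ^ b ≤ profile b (s + t) + profile 0 (s + t) * |s| ^ b := by
  have htri : |t| ^ b ≤ |s + t| ^ b + |s| ^ b :=
    calc |t| ^ b ≤ (|s + t| + |s|) ^ b := by
          gcongr
          simpa using abs_sub (s + t) s
      _ ≤ |s + t| ^ b + |s| ^ b :=
          Real.rpow_add_le_add_rpow (abs_nonneg _) (abs_nonneg _) hb hb'
  calc decay (s + t) ^ 2 * |t| ^ b ≤ decay (s + t) ^ 2 * (|s + t| ^ b + |s| ^ b) := by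
        gcongr
    _ = profile b (s + t) + profile 0 (s + t) * |s| ^ b := by
        rw [profile, profile_zero]; ring

lemma sq_decay_add_mul_rpow_le_of_neg {b : ℝ} (hb : b < 0) (s t : ℝ) :
    decay (s + t) ^ 2 * |t| ^ b ≤ profile 0 (s + t) + profile b t := by
  rcases le_total |t| 1 with ht | ht
  · calc decay (s + t) ^ 2 * |t| ^ b ≤ decay t ^ 2 * |t| ^ b := by
          rw [decay_of_abs_le_one ht, one_pow]
          gcongr
          exact pow_le_one₀ (decay_nonneg _) (decay_le_one _)
      _ ≤ profile 0 (s + t) + profile b t := le_add_of_nonneg_left (profile_nonneg _ _)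
  · calc decay (s + t) ^ 2 * |t| ^ b ≤ decay (s + t) ^ 2 := by
          refine mul_le_of_le_one_right (by positivity) ?_
          exact Real.rpow_le_one_of_one_le_of_nonpos ht hb.le
      _ ≤ profile 0 (s + t) + profile b t := by
          rw [profile_zero]; exact le_add_of_nonneg_right (profile_nonneg _ _)

lemma profile_mul_rpow_le (a b t : ℝ) : profile a t * |t| ^ b ≤ profile (a + b) t := by
  rw [profile, profile, mul_assoc]
  gcongr
  exact Real.le_rpow_add (abs_nonneg t) a b

lemma integrable_mul_comp_add {f g : ℝ → ℝ} (hf : Integrable f) (hg : Integrable g) :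
    Integrable (fun x : ℝ × ℝ => f x.1 * g (x.1 + x.2)) :=
  (measurePreserving_prod_add volume volume).integrable_comp_of_integrable (hf.mul_prod hg)

def weightedMajorant (a b : ℝ) (x : ℝ × ℝ) : ℝ := freqMajorant x.1 x.2 * |x.1| ^ a * |x.2| ^ b

lemma weightedMajorant_nonneg (a b : ℝ) : 0 ≤ weightedMajorant a b := fun x => by
  unfold weightedMajorant; have := freqMajorant_nonneg x.1 x.2; positivity

lemma integrable_profile_mul_sq_decay_add_mul_rpow {a b : ℝ} (ha : -1 < a) (ha' : a < 1)
    (hb : -1 < b) (hb' : b < 1) (hab : a + b < 1) :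
    Integrable fun x : ℝ × ℝ => profile a x.1 * (decay (x.1 + x.2) ^ 2 * |x.2| ^ b) := by
  have hpa := integrable_profile ha ha'
  have hp0 := integrable_profile (e := 0) (by norm_num) (by norm_num)
  have hmeas : AEStronglyMeasurable
      (fun x : ℝ × ℝ => profile a x.1 * (decay (x.1 + x.2) ^ 2 * |x.2| ^ b)) := by
    have := measurable_profile a; have := measurable_decay
    exact Measurable.aestronglyMeasurable (by fun_prop)
  have hnonneg : ∀ᵐ x : ℝ × ℝ, 0 ≤ profile a x.1 * (decay (x.1 + x.2) ^ 2 * |x.2| ^ b) :=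
    ae_of_all _ fun x => by have := profile_nonneg a x.1; positivity
  rcases le_or_gt 0 b with hb0 | hb0
  · refine ((integrable_mul_comp_add hpa (integrable_profile hb hb')).add
      (integrable_mul_comp_add (integrable_profile (by linarith) hab) hp0)).mono_nonneg hmeas
      hnonneg (ae_of_all _ fun x => ?_)
    calc profile a x.1 * (decay (x.1 + x.2) ^ 2 * |x.2| ^ b)
        ≤ profile a x.1 * (profile b (x.1 + x.2) + profile 0 (x.1 + x.2) * |x.1| ^ b) := by
          gcongr
          · exact profile_nonneg _ _
          · exact sq_decay_add_mul_rpow_le_of_nonneg hb0 hb'.le _ _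
      _ = profile a x.1 * profile b (x.1 + x.2)
            + profile a x.1 * |x.1| ^ b * profile 0 (x.1 + x.2) := by ring
      _ ≤ profile a x.1 * profile b (x.1 + x.2)
            + profile (a + b) x.1 * profile 0 (x.1 + x.2) := by
          gcongr
          · exact profile_nonneg _ _
          · exact profile_mul_rpow_le _ _ _
  · refine ((integrable_mul_comp_add hpa hp0).add
      (hpa.mul_prod (integrable_profile hb hb'))).mono_nonneg hmeas hnonneg
      (ae_of_all _ fun x => ?_)
    calc profile a x.1 * (decay (x.1 + x.2) ^ 2 * |x.2| ^ b)
        ≤ profile a x.1 * (profile 0 (x.1 + x.2) + profile b x.2) := by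
          gcongr
          · exact profile_nonneg _ _
          · exact sq_decay_add_mul_rpow_le_of_neg hb0 _ _
      _ = _ := mul_add _ _ _

lemma integrable_weightedMajorant {a b : ℝ} (ha : -1 < a) (ha' : a < 1) (hb : -1 < b)
    (hb' : b < 1) (hab : a + b < 1) : Integrable (weightedMajorant a b) := by
  have hsplit : weightedMajorant a b = fun x => profile a x.1 * profile b x.2 +
      profile a x.1 * (decay (x.1 + x.2) ^ 2 * |x.2| ^ b) := by
    ext x; simp only [weightedMajorant, freqMajorant, profile]; ring
  rw [hsplit]
  exact ((integrable_profile ha ha').mul_prod (integrable_profile hb hb')).add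
    (integrable_profile_mul_sq_decay_add_mul_rpow ha ha' hb hb' hab)

lemma setIntegral_le_mul_integral {α : Type*} [MeasurableSpace α] {μ : Measure α} {s : Set α}
    {f g : α → ℝ} {k : ℝ} (hs : MeasurableSet s) (hf : 0 ≤ f) (hg : Integrable g μ) (hg0 : 0 ≤ g)
    (hk : 0 ≤ k) (hfg : ∀ x ∈ s, f x ≤ k * g x) : ∫ x in s, f x ∂μ ≤ k * ∫ x, g x ∂μ := by
  calc ∫ x in s, f x ∂μ ≤ ∫ x in s, k * g x ∂μ :=
        integral_mono_of_nonneg (ae_of_all _ hf) (hg.const_mul k).integrableOn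
          (ae_restrict_of_forall_mem hs hfg)
    _ ≤ ∫ x, k * g x ∂μ :=
        setIntegral_le_integral (hg.const_mul k) (ae_of_all _ fun x => mul_nonneg hk (hg0 x))
    _ = k * ∫ x, g x ∂μ := integral_const_mul k g

lemma rpow_le_rpow_neg_mul_rpow_add {c t δ : ℝ} (a : ℝ) (hc : 0 < c) (hct : c ≤ t) (hδ : 0 ≤ δ) :
    t ^ a ≤ c ^ (-δ) * t ^ (a + δ) := by
  have ht : 0 < t := hc.trans_le hct
  calc t ^ a = t ^ (-δ) * t ^ (a + δ) := by rw [← Real.rpow_add ht]; ring_nf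
    _ ≤ c ^ (-δ) * t ^ (a + δ) :=
        mul_le_mul_of_nonneg_right (Real.rpow_le_rpow_of_nonpos hc hct (neg_nonpos.2 hδ))
          (Real.rpow_nonneg ht.le _)

lemma weightedMajorant_le_fst {a b c δ : ℝ} (hc : 0 < c) (hδ : 0 ≤ δ) {x : ℝ × ℝ}
    (hx : c ≤ |x.1|) : weightedMajorant a b x ≤ c ^ (-δ) * weightedMajorant (a + δ) b x := by
  have := rpow_le_rpow_neg_mul_rpow_add a hc hx hδ
  have := freqMajorant_nonneg x.1 x.2
  calc weightedMajorant a b x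
        ≤ freqMajorant x.1 x.2 * (c ^ (-δ) * |x.1| ^ (a + δ)) * |x.2| ^ b := by
        unfold weightedMajorant; gcongr
    _ = _ := by unfold weightedMajorant; ring

lemma weightedMajorant_le_snd {a b c δ : ℝ} (hc : 0 < c) (hδ : 0 ≤ δ) {x : ℝ × ℝ}
    (hx : c ≤ |x.2|) : weightedMajorant a b x ≤ c ^ (-δ) * weightedMajorant a (b + δ) x := by
  have := rpow_le_rpow_neg_mul_rpow_add b hc hx hδ
  have := freqMajorant_nonneg x.1 x.2
  calc weightedMajorant a b x
        ≤ freqMajorant x.1 x.2 * |x.1| ^ a * (c ^ (-δ) * |x.2| ^ (b + δ)) := by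
        unfold weightedMajorant; gcongr
    _ = _ := by unfold weightedMajorant; ring

lemma setIntegral_abs_fst_ge_le {f : ℝ × ℝ → ℝ} {a b B δ c : ℝ} (hf : 0 ≤ f) (hB : 0 ≤ B)
    (hfB : ∀ x, f x ≤ B * weightedMajorant a b x) (hW : Integrable (weightedMajorant (a + δ) b))
    (hδ : 0 ≤ δ) (hc : 0 < c) :
    ∫ x in {x : ℝ × ℝ | c ≤ |x.1|}, f x ≤ c ^ (-δ) * (B * ∫ x, weightedMajorant (a + δ) b x) := by
  rw [← mul_assoc, mul_comm (c ^ (-δ))]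
  refine setIntegral_le_mul_integral (measurableSet_le measurable_const measurable_fst.abs) hf hW
    (weightedMajorant_nonneg _ _) (by positivity) fun x hx => (hfB x).trans ?_
  rw [mul_assoc]
  exact mul_le_mul_of_nonneg_left (weightedMajorant_le_fst hc hδ hx) hB

lemma setIntegral_abs_snd_ge_le {f : ℝ × ℝ → ℝ} {a b B δ c : ℝ} (hf : 0 ≤ f) (hB : 0 ≤ B)
    (hfB : ∀ x, f x ≤ B * weightedMajorant a b x) (hW : Integrable (weightedMajorant a (b + δ)))
    (hδ : 0 ≤ δ) (hc : 0 < c) :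
    ∫ x in {x : ℝ × ℝ | c ≤ |x.2|}, f x ≤ c ^ (-δ) * (B * ∫ x, weightedMajorant a (b + δ) x) := by
  rw [← mul_assoc, mul_comm (c ^ (-δ))]
  refine setIntegral_le_mul_integral (measurableSet_le measurable_const measurable_snd.abs) hf hW
    (weightedMajorant_nonneg _ _) (by positivity) fun x hx => (hfB x).trans ?_
  rw [mul_assoc]
  exact mul_le_mul_of_nonneg_left (weightedMajorant_le_snd hc hδ hx) hB

lemma exists_setIntegral_abs_ge_le {f : ℝ × ℝ → ℝ} {a b B δ : ℝ} (hf : 0 ≤ f) (hB : 0 ≤ B)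
    (hfB : ∀ x, f x ≤ B * weightedMajorant a b x) (hδ : 0 ≤ δ)
    (hW₁ : Integrable (weightedMajorant (a + δ) b))
    (hW₂ : Integrable (weightedMajorant a (b + δ))) :
    ∃ C : ℝ, 0 < C ∧ ∀ c : ℝ, 1 ≤ c →
      ∫ x in {x : ℝ × ℝ | c ≤ |x.1|}, f x ≤ C * c ^ (-δ) ∧
      ∫ x in {x : ℝ × ℝ | c ≤ |x.2|}, f x ≤ C * c ^ (-δ) := by
  have hI₁ := integral_nonneg (weightedMajorant_nonneg (a + δ) b) (μ := volume)
  have hI₂ := integral_nonneg (weightedMajorant_nonneg a (b + δ)) (μ := volume)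
  refine ⟨B * ((∫ x, weightedMajorant (a + δ) b x) + ∫ x, weightedMajorant a (b + δ) x) + 1,
    by positivity, fun c hc => ?_⟩
  have hc0 : 0 < c := one_pos.trans_le hc
  have hcδ : 0 ≤ c ^ (-δ) := Real.rpow_nonneg hc0.le _
  exact ⟨(setIntegral_abs_fst_ge_le hf hB hfB hW₁ hδ hc0).trans
      (by nlinarith [mul_nonneg hB hI₁, mul_nonneg hB hI₂]),
    (setIntegral_abs_snd_ge_le hf hB hfB hW₂ hδ hc0).trans
      (by nlinarith [mul_nonneg hB hI₁, mul_nonneg hB hI₂])⟩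

theorem stmt13 (ψ : ℝ × ℝ → ℝ) (hψ : ContDiff ℝ 2 ψ) (hψc : HasCompactSupport ψ)
    (lam₁ lam₂ : ℝ) (h₁ : lam₁ ∈ Set.Ioo (0:ℝ) 2) (h₂ : lam₂ ∈ Set.Ioo (0:ℝ) 2)
    (hsum : 1 < lam₁ + lam₂) :
    Integrable (fun x : ℝ × ℝ =>
      |Qpsi ψ x.1 x.2| ^ 2 * |x.1| ^ (1 - lam₁) * |x.2| ^ (1 - lam₂)) ∧
    ∃ ε : ℝ, 0 < ε ∧ ∃ C : ℝ, 0 < C ∧ ∀ c : ℝ, 1 ≤ c →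
      (∫ x in {x : ℝ × ℝ | c ≤ |x.1|},
          |Qpsi ψ x.1 x.2| ^ 2 * |x.1| ^ (1 - lam₁) * |x.2| ^ (1 - lam₂))
        ≤ C * c ^ (-ε) ∧
      (∫ x in {x : ℝ × ℝ | c ≤ |x.2|},
          |Qpsi ψ x.1 x.2| ^ 2 * |x.1| ^ (1 - lam₁) * |x.2| ^ (1 - lam₂))
        ≤ C * c ^ (-ε) := by
  obtain ⟨B, hB, hQ⟩ := exists_sq_Qpsi_le hψ hψc
  have hf0 : 0 ≤ fun x : ℝ × ℝ => |Qpsi ψ x.1 x.2| ^ 2 * |x.1| ^ (1 - lam₁) * |x.2| ^ (1 - lam₂) :=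
    fun x => by positivity
  have hmaj : ∀ x : ℝ × ℝ, |Qpsi ψ x.1 x.2| ^ 2 * |x.1| ^ (1 - lam₁) * |x.2| ^ (1 - lam₂)
      ≤ B * weightedMajorant (1 - lam₁) (1 - lam₂) x := fun x => by
    rw [sq_abs, weightedMajorant, ← mul_assoc, ← mul_assoc]; gcongr; exact hQ _ _
  have hmeas : Measurable fun x : ℝ × ℝ =>
      |Qpsi ψ x.1 x.2| ^ 2 * |x.1| ^ (1 - lam₁) * |x.2| ^ (1 - lam₂) := by
    have := measurable_Qpsi hψ; fun_prop
  obtain ⟨δ, hδ, hδlt⟩ := exists_between (lt_min (lt_min h₁.1 h₂.1) (sub_pos.2 hsum))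
  simp only [lt_min_iff] at hδlt
  have hW := integrable_weightedMajorant (a := 1 - lam₁) (b := 1 - lam₂) (by linarith [h₁.2])
    (by linarith [h₁.1]) (by linarith [h₂.2]) (by linarith [h₂.1]) (by linarith)
  have hW₁ := integrable_weightedMajorant (a := 1 - lam₁ + δ) (b := 1 - lam₂)
    (by linarith [h₁.2]) (by linarith) (by linarith [h₂.2]) (by linarith [h₂.1]) (by linarith)
  have hW₂ := integrable_weightedMajorant (a := 1 - lam₁) (b := 1 - lam₂ + δ)
    (by linarith [h₁.2]) (by linarith [h₁.1]) (by linarith [h₂.2]) (by linarith) (by linarith)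
  exact ⟨(hW.const_mul B).mono_nonneg hmeas.aestronglyMeasurable (ae_of_all _ hf0)
    (ae_of_all _ hmaj), δ, hδ, exists_setIntegral_abs_ge_le hf0 hB hmaj hδ.le hW₁ hW₂⟩
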